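/- Let q and p be probability mass functions on ℕ with positive tail probabilities. Then for any k ∈ ℕ, the KL divergence between the conditional distributions given T ≥ k satisfies the recursion: D_KL(q(·|T ≥ k) ‖ p(·|T ≥ k)) = f(q,p,k) + q(T ≠ k | T ≥ k) · D_KL(q(·|T ≥ k+1) ‖ p(·|T ≥ k+1)), where f(q,p,k) = q(T=k|T≥k) log[ q(T=k|T≥k)/p(T=k|T≥k) ] + q(T≠k|T≥k) log[ q(T≠k|T≥k)/p(T≠k|T≥k) ]. -/

import Mathlib

/-!
Split the conditional law given `T ≥ k` into the atom `{k}` and the tail `T ≥ k + 1`. On the tail,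
`q(· | T ≥ k) = r_q · q(· | T ≥ k + 1)` with `r_q = q(T ≥ k + 1) / q(T ≥ k) = q(T ≠ k | T ≥ k)`, and
likewise for `p`. Rescaling both arguments of a KL sum by constants `r, s` multiplies it by `r` and
adds `r log (r / s)` times the total mass; this is the `T ≠ k` half of the binary divergence.
-/

open Real

theorem summable_of_tsum_ne_zero {β M : Type*} [AddCommMonoid M] [TopologicalSpace M]
    {f : β → M} (h : ∑' i, f i ≠ 0) : Summable f :=
  by_contra fun hf => h (tsum_eq_zero_of_not_summable hf)

theorem tsum_nat_add_eq_add_tsum_succ_add {M : Type*} [AddCommGroup M] [TopologicalSpace M]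
    [IsTopologicalAddGroup M] [T2Space M] {f : ℕ → M} (k : ℕ)
    (hf : Summable fun i => f (k + i)) :
    ∑' i, f (k + i) = f k + ∑' i, f (k + 1 + i) := by
  rw [hf.tsum_eq_zero_add, add_zero]
  simp only [add_right_comm, add_assoc]

theorem one_sub_div_eq_div_succ {f T : ℕ → ℝ} (hT : ∀ t, T t = ∑' i, f (t + i)) {k : ℕ}
    (hk : T k ≠ 0) : 1 - f k / T k = T (k + 1) / T k := by
  have hf : Summable fun i => f (k + i) := summable_of_tsum_ne_zero (hT k ▸ hk)
  rw [one_sub_div hk, hT, hT, tsum_nat_add_eq_add_tsum_succ_add k hf, add_sub_cancel_left]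

theorem mul_mul_log_mul_div_mul {r s x y : ℝ} (hr : r ≠ 0) (hs : s ≠ 0) (hy : y ≠ 0) :
    r * x * log (r * x / (s * y)) = r * (x * log (x / y)) + r * log (r / s) * x := by
  rcases eq_or_ne x 0 with rfl | hx
  · simp
  rw [mul_div_mul_comm, log_mul (div_ne_zero hr hs) (div_ne_zero hx hy)]
  ring

theorem tsum_mul_mul_log_mul_div_mul {β : Type*} {f g : β → ℝ} {r s : ℝ} (hr : r ≠ 0)
    (hs : s ≠ 0) (hg : ∀ t, g t ≠ 0) (hfg : Summable fun t => f t * log (f t / g t))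
    (hf : Summable f) :
    ∑' t, r * f t * log (r * f t / (s * g t))
      = r * ∑' t, f t * log (f t / g t) + r * log (r / s) * ∑' t, f t := by
  simp_rw [mul_mul_log_mul_div_mul hr hs (hg _)]
  rw [(hfg.mul_left r).tsum_add (hf.mul_left _), tsum_mul_left, tsum_mul_left]

theorem conditional_kl_recursion_general
    (q p tq tp : ℕ → ℝ)
    (hp0 : ∀ t, 0 < p t)
    (htq : ∀ t, tq t = ∑' i, q (t + i)) (htp : ∀ t, tp t = ∑' i, p (t + i))
    (htqpos : ∀ t, 0 < tq t) (htppos : ∀ t, 0 < tp t)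
    (D : ℕ → ℝ)
    (hD : ∀ k, D k = ∑' t, (q (k + t) / tq k) *
        Real.log ((q (k + t) / tq k) / (p (k + t) / tp k)))
    (hDsum : ∀ k, Summable (fun t => (q (k + t) / tq k) *
        Real.log ((q (k + t) / tq k) / (p (k + t) / tp k))))
    (k : ℕ) :
    D k
      = ((q k / tq k) * Real.log ((q k / tq k) / (p k / tp k)) +
         (1 - q k / tq k) * Real.log ((1 - q k / tq k) / (1 - p k / tp k)))
        + (1 - q k / tq k) * D (k + 1) := by
  have hsq : Summable fun t => q (k + 1 + t) :=
    summable_of_tsum_ne_zero (htq (k + 1) ▸ (htqpos (k + 1)).ne')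
  set rq := tq (k + 1) / tq k
  set rp := tp (k + 1) / tp k
  have hrq : 1 - q k / tq k = rq := one_sub_div_eq_div_succ htq (htqpos k).ne'
  have hrp : 1 - p k / tp k = rp := one_sub_div_eq_div_succ htp (htppos k).ne'
  have hshift {f T : ℕ → ℝ} (hT : T (k + 1) ≠ 0) t :
      f (k + (t + 1)) / T k = T (k + 1) / T k * (f (k + 1 + t) / T (k + 1)) := by
    rw [div_mul_div_cancel₀' hT, add_right_comm, add_assoc]
  have hD_tail : ∑' t, (q (k + (t + 1)) / tq k) *
      log ((q (k + (t + 1)) / tq k) / (p (k + (t + 1)) / tp k))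
        = rq * D (k + 1) + rq * log (rq / rp) := by
    simp_rw [hshift (f := q) (htqpos (k + 1)).ne', hshift (f := p) (htppos (k + 1)).ne']
    rw [tsum_mul_mul_log_mul_div_mul (div_pos (htqpos _) (htqpos _)).ne'
      (div_pos (htppos _) (htppos _)).ne' (fun t => (div_pos (hp0 _) (htppos _)).ne')
      (hDsum (k + 1)) (hsq.div_const _), ← hD, tsum_div_const, ← htq,
      div_self (htqpos _).ne', mul_one]
  rw [hD k, (hDsum k).tsum_eq_zero_add, hD_tail, hrq, hrp, add_zero]
  ring

/-- one-step recursion for the KL divergence between the conditional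
distributions of `q` and `p` given `T ≥ k`. -/
theorem conditional_kl_recursion
    (q p tq tp : ℕ → ℝ)
    (hq0 : ∀ t, 0 < q t) (hp0 : ∀ t, 0 < p t)
    (hqsum : ∑' t, q t = 1) (hpsum : ∑' t, p t = 1)
    (htq : ∀ t, tq t = ∑' i, q (t + i)) (htp : ∀ t, tp t = ∑' i, p (t + i))
    (htqpos : ∀ t, 0 < tq t) (htppos : ∀ t, 0 < tp t)
    (D : ℕ → ℝ)
    (hD : ∀ k, D k = ∑' t, (q (k + t) / tq k) *
        Real.log ((q (k + t) / tq k) / (p (k + t) / tp k)))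
    (hDsum : ∀ k, Summable (fun t => (q (k + t) / tq k) *
        Real.log ((q (k + t) / tq k) / (p (k + t) / tp k))))
    (k : ℕ) :
    D k
      = ((q k / tq k) * Real.log ((q k / tq k) / (p k / tp k)) +
         (1 - q k / tq k) * Real.log ((1 - q k / tq k) / (1 - p k / tp k)))
        + (1 - q k / tq k) * D (k + 1) :=
  conditional_kl_recursion_general q p tq tp hp0 htq htp htqpos htppos D hD hDsum k
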